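/- Let f : ZMod N → ℂ with ‖f‖₂ ≤ 1 (with respect to uniform probability measure), let ε > 0, and let η : ℕ → ℝ₊ be a positive decreasing function tending to 0. Enumerate the frequencies ξ_1, ..., ξ_N so that |f̂(ξ_1)| ≥ ... ≥ |f̂(ξ_N)|. Then there exists m ∈ ℕ, bounded by the number obtained by starting at 1 and iterating t ↦ η(t)^{−2} at most ε^{−2} times, and a decomposition f = f₁ + f₂ + f₃ where f₁(x) = ∑_{j=1}^{m} f̂(ξ_j)·exp(2πi·ξ_j·x/N), all Fourier coefficients of f₂ have magnitude at most η(m), and ‖f₃‖₂ ≤ ε. -/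

import Mathlib

open Complex

/-- The discrete Fourier transform on `ZMod N`, normalized by `1/N`. -/
noncomputable def dft (N : ℕ) [NeZero N] (f : ZMod N → ℂ) (ξ : ZMod N) : ℂ :=
  (1 / (N : ℂ)) * ∑ x : ZMod N,
    f x * Complex.exp (-2 * (Real.pi : ℂ) * I * (x.val : ℂ) * (ξ.val : ℂ) / (N : ℂ))

/-!
Order the frequencies so that `|f̂(ξ_j)|` decreases and let `E n = ∑_{j < n} |f̂(ξ_j)|²`, which
lies in `[0, 1]` by Parseval. Along `m_k = g^[k] 1` with `g t = ⌈η(t)⁻²⌉`, the `⌈ε⁻²⌉` increments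
`E m_{k+1} - E m_k` telescope to at most `1`, so one of them is at most `ε²`; take `m = m_k`.
Split the Fourier expansion of `f` into the frequencies `j < m` (this is `f₁`), the window
`m ≤ j < g m` (this is `f₃`, whose squared `L²` norm is that increment) and the rest (`f₂`).
Monotonicity gives `(i + 1) |f̂(ξ_i)|² ≤ ‖f‖₂² ≤ 1`, so every coefficient left in `f₂` has
`i + 1 > g m ≥ η(m)⁻²`, i.e. `|f̂(ξ_i)| ≤ η(m)`.
-/

open Finset Function
open ZMod (stdAddChar)
open scoped ComplexConjugate

section Fourier

variable {N : ℕ} [NeZero N]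

lemma exp_val_mul_val_eq_stdAddChar (a x : ZMod N) :
    Complex.exp (2 * (Real.pi : ℂ) * I * (a.val : ℂ) * (x.val : ℂ) / (N : ℂ)) =
      stdAddChar (a * x) := by
  have hax : a * x = ((a.val * x.val : ℕ) : ZMod N) := by simp
  rw [hax, ZMod.stdAddChar_apply, ZMod.toCircle_natCast]
  push_cast
  ring_nf

lemma sum_stdAddChar_mul_conj (a b : ZMod N) :
    ∑ x : ZMod N, stdAddChar (a * x) * conj (stdAddChar (b * x)) =
      if a = b then (N : ℂ) else 0 := by
  have hshift : ∀ x : ZMod N,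
      stdAddChar (a * x) * conj (stdAddChar (b * x)) = stdAddChar (x * (a - b)) := by
    intro x
    rw [← AddChar.map_neg_eq_conj, ← AddChar.map_add_eq_mul]
    ring_nf
  simp only [hshift, AddChar.sum_mulShift _ (ZMod.isPrimitive_stdAddChar N), ZMod.card,
    sub_eq_zero, Nat.cast_ite, Nat.cast_zero]

lemma dft_eq_inv_mul_sum_mul_conj (f : ZMod N → ℂ) (ζ : ZMod N) :
    dft N f ζ = (N : ℂ)⁻¹ * ∑ x, f x * conj (stdAddChar (ζ * x)) := by
  rw [dft, one_div]
  congr 1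
  refine sum_congr rfl fun x _ => ?_
  rw [← AddChar.map_neg_eq_conj, AddChar.map_neg_eq_inv, ← exp_val_mul_val_eq_stdAddChar,
    ← Complex.exp_neg]
  congr 2
  ring

lemma dft_sub (f g : ZMod N → ℂ) : dft N (f - g) = dft N f - dft N g := by
  ext ζ
  simp only [dft_eq_inv_mul_sum_mul_conj, Pi.sub_apply, sub_mul, sum_sub_distrib, mul_sub]

variable {ι : Type*} [Fintype ι]

noncomputable def trigPoly (ξ : ι → ZMod N) (d : ι → ℂ) (x : ZMod N) : ℂ :=
  ∑ j, d j * stdAddChar (ξ j * x)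

lemma dft_trigPoly {ξ : ι → ZMod N} (hξ : Injective ξ) (d : ι → ℂ) (i : ι) :
    dft N (trigPoly ξ d) (ξ i) = d i := by
  classical
  calc dft N (trigPoly ξ d) (ξ i)
      = (N : ℂ)⁻¹ * ∑ j, d j * ∑ x, stdAddChar (ξ j * x) * conj (stdAddChar (ξ i * x)) := by
        simp only [dft_eq_inv_mul_sum_mul_conj, trigPoly, sum_mul, mul_sum, mul_assoc]
        rw [sum_comm]
    _ = d i := by
        simp only [sum_stdAddChar_mul_conj, hξ.eq_iff, mul_ite, mul_zero, sum_ite_eq', mem_univ,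
          if_true]
        rw [mul_comm (d i), inv_mul_cancel_left₀ (NeZero.ne (N : ℂ))]

lemma mean_norm_sq_trigPoly {ξ : ι → ZMod N} (hξ : Injective ξ) (d : ι → ℂ) :
    (1 / (N : ℝ)) * ∑ x, ‖trigPoly ξ d x‖ ^ 2 = ∑ j, ‖d j‖ ^ 2 := by
  have key : (N : ℂ)⁻¹ * ∑ x, trigPoly ξ d x * conj (trigPoly ξ d x) = ∑ j, conj (d j) * d j :=
    calc (N : ℂ)⁻¹ * ∑ x, trigPoly ξ d x * conj (trigPoly ξ d x)
        = ∑ j, conj (d j) * dft N (trigPoly ξ d) (ξ j) := by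
          have hx : ∀ x, trigPoly ξ d x * conj (trigPoly ξ d x) =
              ∑ j, conj (d j) * (trigPoly ξ d x * conj (stdAddChar (ξ j * x))) := by
            intro x
            nth_rw 2 [trigPoly]
            rw [map_sum, mul_sum]
            exact sum_congr rfl fun j _ => by rw [map_mul]; ring
          simp only [hx, dft_eq_inv_mul_sum_mul_conj, mul_sum]
          rw [sum_comm]
          exact sum_congr rfl fun j _ => sum_congr rfl fun x _ => by ring
      _ = ∑ j, conj (d j) * d j := by simp only [dft_trigPoly hξ]
  simp only [Complex.mul_conj', mul_comm (conj _)] at key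
  apply Complex.ofReal_injective
  push_cast at key ⊢
  rwa [one_div]

lemma trigPoly_dft (f : ZMod N → ℂ) : trigPoly id (dft N f) = f := by
  ext x
  calc trigPoly id (dft N f) x
      = (N : ℂ)⁻¹ * ∑ y, f y * ∑ ζ, stdAddChar (x * ζ) * conj (stdAddChar (y * ζ)) := by
        simp only [trigPoly, id, dft_eq_inv_mul_sum_mul_conj, sum_mul, mul_sum]
        rw [sum_comm]
        refine sum_congr rfl fun y _ => sum_congr rfl fun ζ _ => ?_
        rw [mul_comm ζ x, mul_comm ζ y]
        ring
    _ = f x := by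
        simp only [sum_stdAddChar_mul_conj, mul_ite, mul_zero, sum_ite_eq, mem_univ, if_true]
        rw [mul_comm (f x), inv_mul_cancel_left₀ (NeZero.ne (N : ℂ))]

lemma sum_norm_sq_dft (f : ZMod N → ℂ) :
    ∑ ζ, ‖dft N f ζ‖ ^ 2 = (1 / (N : ℝ)) * ∑ x, ‖f x‖ ^ 2 := by
  conv_rhs => rw [← trigPoly_dft f]
  exact (mean_norm_sq_trigPoly injective_id _).symm

end Fourier

lemma exists_succ_sub_le_of_sub_le_mul (u : ℕ → ℝ) {K : ℕ} (hK : 0 < K) {δ : ℝ}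
    (h : u K - u 0 ≤ K * δ) : ∃ k < K, u (k + 1) - u k ≤ δ := by
  have hsum : ∑ k ∈ range K, (u (k + 1) - u k) ≤ ∑ _k ∈ range K, δ := by
    rwa [sum_range_sub, sum_const, card_range, nsmul_eq_mul]
  obtain ⟨k, hk, hle⟩ := exists_le_of_sum_le (nonempty_range_iff.mpr hK.ne') hsum
  exact ⟨k, mem_range.mp hk, hle⟩

lemma succ_mul_le_sum_of_antitone {n : ℕ} {a : Fin n → ℝ} (ha : Antitone a) (ha₀ : 0 ≤ a)
    (i : Fin n) : ((i : ℕ) + 1 : ℝ) * a i ≤ ∑ j, a j :=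
  calc ((i : ℕ) + 1 : ℝ) * a i = ∑ _j ∈ Iic i, a i := by simp [Fin.card_Iic]
    _ ≤ ∑ j ∈ Iic i, a j := sum_le_sum fun j hj => ha (mem_Iic.mp hj)
    _ ≤ ∑ j, a j := sum_le_sum_of_subset_of_nonneg (subset_univ _) fun j _ _ => ha₀ j

lemma sum_ite_lt_sub_sum_ite_lt {n : ℕ} (a : Fin n → ℝ) {m m' : ℕ} (h : m ≤ m') :
    (∑ j : Fin n, if (j : ℕ) < m' then a j else 0) -
        ∑ j : Fin n, (if (j : ℕ) < m then a j else 0) =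
      ∑ j : Fin n, if m ≤ (j : ℕ) ∧ (j : ℕ) < m' then a j else 0 := by
  rw [sub_eq_iff_eq_add, ← sum_add_distrib]
  refine sum_congr rfl fun j _ => ?_
  split_ifs <;> first | omega | ring

lemma abs_le_of_mul_sq_le_one {x δ t : ℝ} (hδ : 0 < δ) (ht : δ⁻¹ ^ 2 ≤ t) (h : t * x ^ 2 ≤ 1) :
    |x| ≤ δ := by
  rw [← sq_le_sq₀ (abs_nonneg x) hδ.le, sq_abs]
  calc x ^ 2 = δ ^ 2 * (δ⁻¹ ^ 2 * x ^ 2) := by field_simp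
    _ ≤ δ ^ 2 * 1 := by gcongr; exact (mul_le_mul_of_nonneg_right ht (sq_nonneg x)).trans h
    _ = δ ^ 2 := mul_one _

noncomputable def partialFourierEnergy (N : ℕ) [NeZero N] (f : ZMod N → ℂ) (ξ : Fin N → ZMod N)
    (n : ℕ) : ℝ :=
  ∑ j : Fin N, if (j : ℕ) < n then ‖dft N f (ξ j)‖ ^ 2 else 0

section Decomposition

variable {N : ℕ} [NeZero N] {f : ZMod N → ℂ} {ξ : Fin N → ZMod N}

lemma sum_norm_sq_dft_comp (hξ : Bijective ξ) :
    ∑ j, ‖dft N f (ξ j)‖ ^ 2 = (1 / (N : ℝ)) * ∑ x, ‖f x‖ ^ 2 := by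
  rw [← sum_norm_sq_dft f]
  exact Fintype.sum_bijective ξ hξ _ _ fun _ => rfl

lemma partialFourierEnergy_nonneg (n : ℕ) : 0 ≤ partialFourierEnergy N f ξ n := by
  unfold partialFourierEnergy
  exact sum_nonneg fun j _ => by split_ifs <;> positivity

lemma partialFourierEnergy_le (hξ : Bijective ξ) (n : ℕ) :
    partialFourierEnergy N f ξ n ≤ (1 / (N : ℝ)) * ∑ x, ‖f x‖ ^ 2 := by
  rw [← sum_norm_sq_dft_comp hξ]
  exact sum_le_sum fun j _ => by split_ifs <;> simp

lemma succ_mul_norm_sq_dft_le (hξ : Bijective ξ)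
    (hmono : Antitone fun i => ‖dft N f (ξ i)‖) (i : Fin N) :
    ((i : ℕ) + 1 : ℝ) * ‖dft N f (ξ i)‖ ^ 2 ≤ (1 / (N : ℝ)) * ∑ x, ‖f x‖ ^ 2 := by
  rw [← sum_norm_sq_dft_comp hξ]
  exact succ_mul_le_sum_of_antitone (a := fun j => ‖dft N f (ξ j)‖ ^ 2)
    (fun i j hij => pow_le_pow_left₀ (norm_nonneg _) (hmono hij) 2) (fun _ => sq_nonneg _) i

lemma exists_decomposition_of_partialFourierEnergy_sub_le
    (hf : (1 / (N : ℝ)) * ∑ x : ZMod N, ‖f x‖ ^ 2 ≤ 1) (hξ : Bijective ξ)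
    (hmono : Antitone fun i => ‖dft N f (ξ i)‖) {m m' : ℕ} (hmm' : m ≤ m') {δ ε : ℝ}
    (hδ : 0 < δ) (hm' : δ⁻¹ ^ 2 ≤ m') (hε : 0 ≤ ε)
    (henergy : partialFourierEnergy N f ξ m' - partialFourierEnergy N f ξ m ≤ ε ^ 2) :
    ∃ f₂ f₃ : ZMod N → ℂ,
      (∀ x : ZMod N, f x =
          (∑ j : Fin N, if (j : ℕ) < m then
              dft N f (ξ j) *
                Complex.exp (2 * (Real.pi : ℂ) * I * ((ξ j).val : ℂ) * (x.val : ℂ) / (N : ℂ))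
            else 0)
          + f₂ x + f₃ x) ∧
      (∀ ζ : ZMod N, ‖dft N f₂ ζ‖ ≤ δ) ∧
      Real.sqrt ((1 / (N : ℝ)) * ∑ x : ZMod N, ‖f₃ x‖ ^ 2) ≤ ε := by
  set c : Fin N → ℂ := fun j => dft N f (ξ j)
  set low : Fin N → ℂ := fun j => if (j : ℕ) < m then c j else 0
  set window : Fin N → ℂ := fun j => if m ≤ (j : ℕ) ∧ (j : ℕ) < m' then c j else 0
  refine ⟨f - trigPoly ξ low - trigPoly ξ window, trigPoly ξ window, fun x => ?_, fun ζ => ?_, ?_⟩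
  · have hlow : (∑ j : Fin N, if (j : ℕ) < m then
          c j * Complex.exp (2 * (Real.pi : ℂ) * I * ((ξ j).val : ℂ) * (x.val : ℂ) / (N : ℂ))
        else 0) = trigPoly ξ low x := by
      simp only [trigPoly, exp_val_mul_val_eq_stdAddChar, low, ite_mul, zero_mul]
    rw [hlow, Pi.sub_apply, Pi.sub_apply]
    ring
  · obtain ⟨i, rfl⟩ := hξ.surjective ζ
    rw [dft_sub, dft_sub, Pi.sub_apply, Pi.sub_apply, dft_trigPoly hξ.injective,
      dft_trigPoly hξ.injective]
    by_cases hi : (i : ℕ) < m'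
    · have hzero : dft N f (ξ i) - low i - window i = 0 := by
        simp only [low, window]
        split_ifs <;> first | omega | ring
      rw [hzero, norm_zero]
      exact hδ.le
    · have htail : dft N f (ξ i) - low i - window i = dft N f (ξ i) := by
        simp only [low, window]
        split_ifs <;> first | omega | ring
      rw [htail, ← abs_norm]
      have hi' : (m' : ℝ) ≤ (i : ℕ) + 1 := by exact_mod_cast (not_lt.mp hi).trans (Nat.le_succ _)
      exact abs_le_of_mul_sq_le_one hδ (hm'.trans hi')
        ((succ_mul_norm_sq_dft_le hξ hmono i).trans hf)
  · rw [Real.sqrt_le_left hε, mean_norm_sq_trigPoly hξ.injective]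
    calc ∑ j, ‖window j‖ ^ 2
        = ∑ j : Fin N, if m ≤ (j : ℕ) ∧ (j : ℕ) < m' then ‖c j‖ ^ 2 else 0 := by
          refine sum_congr rfl fun j _ => ?_
          split_ifs <;> simp [window, *]
      _ ≤ ε ^ 2 := by
          rwa [← sum_ite_lt_sub_sum_ite_lt _ hmm']

end Decomposition

theorem koopman_von_neumann_decomposition_general (N : ℕ) [NeZero N] (f : ZMod N → ℂ)
    (hf : (1 / (N : ℝ)) * ∑ x : ZMod N, ‖f x‖ ^ 2 ≤ 1)
    {ε : ℝ} (hε : 0 < ε) (η : ℕ → ℝ) (hηpos : ∀ t, 0 < η t) (hηdec : Antitone η)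
    (ξ : Fin N → ZMod N) (hbij : Function.Bijective ξ)
    (hmono : ∀ i j : Fin N, i ≤ j → ‖dft N f (ξ j)‖ ≤ ‖dft N f (ξ i)‖) :
    ∃ m : ℕ, m ≤ (fun t : ℕ => ⌈(η t)⁻¹ ^ 2⌉₊)^[⌈ε⁻¹ ^ 2⌉₊] 1 ∧
      ∃ f₂ f₃ : ZMod N → ℂ,
        (∀ x : ZMod N, f x =
            (∑ j : Fin N, if (j : ℕ) < m then
                dft N f (ξ j) *
                  Complex.exp (2 * (Real.pi : ℂ) * I * ((ξ j).val : ℂ) * (x.val : ℂ) / (N : ℂ))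
              else 0)
            + f₂ x + f₃ x) ∧
        (∀ ζ : ZMod N, ‖dft N f₂ ζ‖ ≤ η m) ∧
        Real.sqrt ((1 / (N : ℝ)) * ∑ x : ZMod N, ‖f₃ x‖ ^ 2) ≤ ε := by
  set g : ℕ → ℕ := fun t => ⌈(η t)⁻¹ ^ 2⌉₊
  set E := partialFourierEnergy N f ξ
  have hg : Monotone g := fun s t hst =>
    Nat.ceil_mono (pow_le_pow_left₀ (by have := hηpos s; positivity)
      (inv_anti₀ (hηpos t) (hηdec hst)) 2)
  have hiter : Monotone fun k => g^[k] 1 :=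
    hg.monotone_iterate_of_le_map (Nat.one_le_ceil_iff.mpr (by have := hηpos 1; positivity))
  have hK : 0 < ⌈ε⁻¹ ^ 2⌉₊ := Nat.ceil_pos.mpr (by positivity)
  have htotal : E (g^[⌈ε⁻¹ ^ 2⌉₊] 1) - E (g^[0] 1) ≤ ⌈ε⁻¹ ^ 2⌉₊ * ε ^ 2 :=
    calc E _ - E _ ≤ 1 - 0 :=
          sub_le_sub ((partialFourierEnergy_le hbij _).trans hf) (partialFourierEnergy_nonneg _)
      _ = ε⁻¹ ^ 2 * ε ^ 2 := by rw [sub_zero]; field_simp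
      _ ≤ ⌈ε⁻¹ ^ 2⌉₊ * ε ^ 2 := by gcongr; exact Nat.le_ceil _
  obtain ⟨k, hkK, hk⟩ := exists_succ_sub_le_of_sub_le_mul (fun k => E (g^[k] 1)) hK htotal
  have hstep : g^[k + 1] 1 = g (g^[k] 1) := Function.iterate_succ_apply' g k 1
  have hle : g^[k] 1 ≤ g (g^[k] 1) := hstep ▸ hiter k.le_succ
  rw [hstep] at hk
  exact ⟨g^[k] 1, hiter hkK.le, exists_decomposition_of_partialFourierEnergy_sub_le hf hbij hmono
    hle (hηpos _) (Nat.le_ceil _) hε.le hk⟩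

theorem koopman_von_neumann_decomposition (N : ℕ) [NeZero N] (f : ZMod N → ℂ)
    (hf : (1 / (N : ℝ)) * ∑ x : ZMod N, ‖f x‖ ^ 2 ≤ 1)
    {ε : ℝ} (hε : 0 < ε) (η : ℕ → ℝ) (hηpos : ∀ t, 0 < η t) (hηdec : Antitone η)
    (hη0 : Filter.Tendsto η Filter.atTop (nhds 0))
    (ξ : Fin N → ZMod N) (hbij : Function.Bijective ξ)
    (hmono : ∀ i j : Fin N, i ≤ j → ‖dft N f (ξ j)‖ ≤ ‖dft N f (ξ i)‖) :
    ∃ m : ℕ, m ≤ (fun t : ℕ => ⌈(η t)⁻¹ ^ 2⌉₊)^[⌈ε⁻¹ ^ 2⌉₊] 1 ∧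
      ∃ f₂ f₃ : ZMod N → ℂ,
        (∀ x : ZMod N, f x =
            (∑ j : Fin N, if (j : ℕ) < m then
                dft N f (ξ j) *
                  Complex.exp (2 * (Real.pi : ℂ) * I * ((ξ j).val : ℂ) * (x.val : ℂ) / (N : ℂ))
              else 0)
            + f₂ x + f₃ x) ∧
        (∀ ζ : ZMod N, ‖dft N f₂ ζ‖ ≤ η m) ∧
        Real.sqrt ((1 / (N : ℝ)) * ∑ x : ZMod N, ‖f₃ x‖ ^ 2) ≤ ε :=
  koopman_von_neumann_decomposition_general N f hf hε η hηpos hηdec ξ hbij hmono
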